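/- Let (R_n)_{n≥0} be a cyclic urn process with m types started with one ball of type 0. For all k, ℓ ∈ {0,…,m−1} and all n ≥ 0, E[u_k(R_n)·u_ℓ(R_n)] = Π_{s=1}^{n} ((s + ω^k + ω^ℓ)/s) + Σ_{s=1}^{n} (ω^{k+ℓ}/s) · Π_{t=1}^{s−1} ((t + ω^{k+ℓ})/t) · Π_{t=s+1}^{n} ((t + ω^k + ω^ℓ)/t), where empty products equal 1. -/

import Mathlib

open MeasureTheory ProbabilityTheory Filter Complex Finset Topology

noncomputable section

/-- `ω = exp(2πi/m)`, the `m`-th elementary root of unity. -/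
def cw (m : ℕ) : ℂ := Complex.exp (2 * Real.pi * Complex.I / m)

/-- `λ_k = cos(2πk/m)`. -/
def lam (m k : ℕ) : ℝ := Real.cos (2 * Real.pi * k / m)

/-- `μ_k = sin(2πk/m)`. -/
def muim (m k : ℕ) : ℝ := Real.sin (2 * Real.pi * k / m)

/-- the eigenvector `v_k = (1/m)(1, ω^{-k}, …, ω^{-(m-1)k})`. -/
def vvec (m k : ℕ) : Fin m → ℂ :=
  fun t => (m : ℂ)⁻¹ * cw m ^ (-((k * (t : ℕ) : ℕ) : ℤ))

/-- the dual coefficient `u_k(w) = ∑_t ω^{kt} w_t`. -/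
def ucoef (m k : ℕ) (w : Fin m → ℝ) : ℂ :=
  ∑ t : Fin m, cw m ^ (k * (t : ℕ)) * (w t : ℂ)

/-- the replacement matrix `A` of the cyclic urn. -/
def repA (m : ℕ) : Matrix (Fin m) (Fin m) ℝ :=
  Matrix.of fun i j => if (j : ℕ) = ((i : ℕ) + 1) % m then 1 else 0

/-- the filtration `𝓕_n = σ(R_0, …, R_n)`. -/
def urnFilt {Ω : Type*} [MeasurableSpace Ω] (m : ℕ) (R : ℕ → Ω → Fin m → ℝ) (n : ℕ) :
    MeasurableSpace Ω :=
  ⨆ i ∈ Finset.range (n + 1), MeasurableSpace.comap (R i) inferInstance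

/-- A cyclic urn process with `m` types started with one ball of type `j0`. -/
structure IsCyclicUrn {Ω : Type*} [MeasurableSpace Ω] (μ : Measure Ω) (m : ℕ) (j0 : Fin m)
    (R : ℕ → Ω → Fin m → ℝ) : Prop where
  isProb : IsProbabilityMeasure μ
  meas : ∀ n, Measurable (R n)
  natVal : ∀ n ω i, ∃ z : ℕ, R n ω i = z
  init : ∀ ω, R 0 ω = fun i => if i = j0 then 1 else 0
  step : ∀ n, ∀ j : Fin m,
    μ[Set.indicator {ω | R (n + 1) ω =
        fun i => R n ω i + if (i : ℕ) = ((j : ℕ) + 1) % m then 1 else 0}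
      (fun _ => (1 : ℝ)) | urnFilt m R n]
      =ᵐ[μ] fun ω => R n ω j / (n + 1)

/-- componentwise expectation `E[X]` of a random vector. -/
def expVec {Ω : Type*} [MeasurableSpace Ω] (μ : Measure Ω) {m : ℕ}
    (X : Ω → Fin m → ℝ) : Fin m → ℝ := fun i => ∫ ω, X ω i ∂μ

/-- the martingale `M_{k,n} = (Γ(n+1)/Γ(n+1+ω^k)) u_k(R_n - E[R_n])`, with `M_{k,0} = 0`. -/
def Mart {Ω : Type*} [MeasurableSpace Ω] (μ : Measure Ω) (m k : ℕ)
    (R : ℕ → Ω → Fin m → ℝ) (n : ℕ) (ω : Ω) : ℂ :=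
  if n = 0 then 0
  else (Complex.Gamma ((n : ℂ) + 1) / Complex.Gamma ((n : ℂ) + 1 + cw m ^ k)) *
    ucoef m k (fun t => R n ω t - expVec μ (R n) t)

/-- `ν` is the centered Gaussian distribution `𝒩(0, S)` on `ℝ^d` (Cramér–Wold
characterization: every linear functional is one-dimensional centered Gaussian). -/
def IsCenteredGaussian {d : ℕ} (ν : Measure (Fin d → ℝ)) (S : Matrix (Fin d) (Fin d) ℝ) : Prop :=
  IsProbabilityMeasure ν ∧
  ∀ l : Fin d → ℝ,
    ν.map (fun x => ∑ i, l i * x i) =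
      gaussianReal 0 (Real.toNNReal (∑ i, ∑ j, l i * S i j * l j))

/-- convergence in distribution of the random vectors `X_n` to the law `ν`. -/
def TendstoInDist {Ω : Type*} [MeasurableSpace Ω] (μ : Measure Ω) {d : ℕ}
    (X : ℕ → Ω → Fin d → ℝ) (ν : Measure (Fin d → ℝ)) : Prop :=
  ∀ f : BoundedContinuousFunction (Fin d → ℝ) ℝ,
    Tendsto (fun n => ∫ ω, f (X n ω) ∂μ) atTop (𝓝 (∫ x, f x ∂ν))

/-!
Conditionally on `𝓕_n`, a ball of type `j + 1` is added with probability `R_{n,j}/(n+1)`, and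
this shifts `u_q` by `ω^q ω^{qj}`. Averaging against the weights `R_{n,j}` turns
`∑_j R_{n,j} ω^{qj}` back into `u_q(R_n)`, and `∑_j R_{n,j} = n + 1` almost surely, so
`E u_q(R_{n+1}) = (n+1+ω^q)/(n+1) · E u_q(R_n)` and
`E[u_k u_l(R_{n+1})] = (n+1+ω^k+ω^l)/(n+1) · E[u_k u_l(R_n)] + ω^{k+l}/(n+1) · E u_{k+l}(R_n)`.
The first recursion is solved by a product, the second by variation of constants.
-/

lemma integral_smul_eq_of_condExp_ae_eq {Ω E : Type*} [NormedAddCommGroup E] [NormedSpace ℝ E]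
    [CompleteSpace E] {m mΩ : MeasurableSpace Ω} {μ : Measure Ω} (hm : m ≤ mΩ)
    [SigmaFinite (μ.trim hm)] {f p : Ω → ℝ} {g : Ω → E} (hf : Integrable f μ)
    (hfg : Integrable (f • g) μ) (hg : AEStronglyMeasurable[m] g μ) (hp : μ[f | m] =ᵐ[μ] p) :
    ∫ ω, f ω • g ω ∂μ = ∫ ω, p ω • g ω ∂μ := calc
  ∫ ω, f ω • g ω ∂μ = ∫ ω, μ[f • g | m] ω ∂μ := (integral_condExp hm).symm
  _ = ∫ ω, p ω • g ω ∂μ := integral_congr_ae <|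
    (condExp_smul_of_aestronglyMeasurable_right hf hfg hg).trans (hp.smul .rfl)

lemma isPrimitiveRoot_cw {m : ℕ} (hm : m ≠ 0) : IsPrimitiveRoot (cw m) m :=
  Complex.isPrimitiveRoot_exp m hm

lemma cw_pow_mul_val_add_one {m : ℕ} [NeZero m] (q : ℕ) (j : Fin m) :
    cw m ^ (q * ((j + 1 : Fin m) : ℕ)) = cw m ^ q * cw m ^ (q * j) := by
  have h := (isPrimitiveRoot_cw (NeZero.ne m)).pow_eq_one
  rw [← pow_add, pow_eq_pow_mod _ h, pow_eq_pow_mod (q + q * j) h, Fin.val_add, Fin.val_one',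
    Nat.add_mod_mod, Nat.mul_mod, Nat.mod_mod, ← Nat.mul_mod]
  ring_nf

lemma ucoef_add (m q : ℕ) (v w : Fin m → ℝ) : ucoef m q (v + w) = ucoef m q v + ucoef m q w := by
  simp only [ucoef, Pi.add_apply, Complex.ofReal_add, mul_add, Finset.sum_add_distrib]

lemma ucoef_single (m q : ℕ) (i : Fin m) : ucoef m q (Pi.single i 1) = cw m ^ (q * i) := by
  simp [ucoef, Pi.single_apply, apply_ite]

lemma ucoef_add_single_succ {m : ℕ} [NeZero m] (q : ℕ) (w : Fin m → ℝ) (j : Fin m) :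
    ucoef m q (w + Pi.single (j + 1) 1) = ucoef m q w + cw m ^ q * cw m ^ (q * j) := by
  rw [ucoef_add, ucoef_single, cw_pow_mul_val_add_one]

lemma norm_cw (m : ℕ) : ‖cw m‖ = 1 := by
  simp [cw, Complex.norm_exp, Complex.div_re]

lemma norm_ucoef_le {m : ℕ} (q : ℕ) (w : Fin m → ℝ) : ‖ucoef m q w‖ ≤ m * ‖w‖ := calc
  ‖ucoef m q w‖ ≤ ∑ t : Fin m, ‖cw m ^ (q * (t : ℕ)) * (w t : ℂ)‖ := norm_sum_le _ _
  _ ≤ ∑ _t : Fin m, ‖w‖ := by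
    gcongr with t
    rw [norm_mul, norm_pow, norm_cw, one_pow, one_mul, Complex.norm_real]
    exact norm_le_pi_norm w t
  _ = m * ‖w‖ := by simp

lemma measurable_ucoef (m q : ℕ) : Measurable (ucoef m q) := by
  unfold ucoef; fun_prop

lemma sum_mul_cw_pow (m q : ℕ) (w : Fin m → ℝ) :
    ∑ j : Fin m, (w j : ℂ) * cw m ^ (q * j) = ucoef m q w := by
  simp only [ucoef, mul_comm]

lemma sum_mul_ucoef_add_single_succ {m : ℕ} [NeZero m] (q : ℕ) (w : Fin m → ℝ) :
    ∑ j : Fin m, (w j : ℂ) * ucoef m q (w + Pi.single (j + 1) 1)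
      = (∑ j : Fin m, (w j : ℂ) + cw m ^ q) * ucoef m q w := by
  have expand : ∀ j : Fin m, (w j : ℂ) * ucoef m q (w + Pi.single (j + 1) 1)
      = ucoef m q w * w j + cw m ^ q * (w j * cw m ^ (q * j)) := fun j => by
    rw [ucoef_add_single_succ]; ring
  simp only [expand, Finset.sum_add_distrib, ← Finset.mul_sum, sum_mul_cw_pow]
  ring

lemma sum_mul_ucoef_mul_ucoef_add_single_succ {m : ℕ} [NeZero m] (k l : ℕ) (w : Fin m → ℝ) :
    ∑ j : Fin m, (w j : ℂ) *
        (ucoef m k (w + Pi.single (j + 1) 1) * ucoef m l (w + Pi.single (j + 1) 1))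
      = (∑ j : Fin m, (w j : ℂ) + (cw m ^ k + cw m ^ l)) * (ucoef m k w * ucoef m l w)
        + cw m ^ (k + l) * ucoef m (k + l) w := by
  have expand : ∀ j : Fin m, (w j : ℂ) *
      (ucoef m k (w + Pi.single (j + 1) 1) * ucoef m l (w + Pi.single (j + 1) 1))
      = ucoef m k w * ucoef m l w * w j + cw m ^ k * ucoef m l w * (w j * cw m ^ (k * j))
        + cw m ^ l * ucoef m k w * (w j * cw m ^ (l * j))
        + cw m ^ (k + l) * (w j * cw m ^ ((k + l) * j)) := fun j => by
    rw [ucoef_add_single_succ, ucoef_add_single_succ, add_mul k, pow_add _ (k * j), pow_add]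
    ring
  simp only [expand, Finset.sum_add_distrib, ← Finset.mul_sum, sum_mul_cw_pow]
  ring

lemma integrable_ucoef_comp {Ω : Type*} [MeasurableSpace Ω] {μ : Measure Ω} [IsFiniteMeasure μ]
    {m : ℕ} {X : Ω → Fin m → ℝ} (hX : Measurable X) {C : ℝ} (hC : ∀ᵐ ω ∂μ, ‖X ω‖ ≤ C)
    (q : ℕ) : Integrable (fun ω => ucoef m q (X ω)) μ :=
  .of_bound ((measurable_ucoef m q).comp hX).aestronglyMeasurable (m * C) <|
    hC.mono fun _ h => (norm_ucoef_le q _).trans (by gcongr)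

lemma integrable_ucoef_mul_ucoef_comp {Ω : Type*} [MeasurableSpace Ω] {μ : Measure Ω}
    [IsFiniteMeasure μ] {m : ℕ} {X : Ω → Fin m → ℝ} (hX : Measurable X) {C : ℝ}
    (hC : ∀ᵐ ω ∂μ, ‖X ω‖ ≤ C) (k l : ℕ) :
    Integrable (fun ω => ucoef m k (X ω) * ucoef m l (X ω)) μ :=
  (integrable_ucoef_comp hX hC l).bdd_mul (c := m * C)
    ((measurable_ucoef m k).comp hX).aestronglyMeasurable <|
      hC.mono fun _ h => (norm_ucoef_le k _).trans (by gcongr)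

lemma eq_mul_prod_of_succ {c : ℂ} {a : ℕ → ℂ}
    (h : ∀ n : ℕ, a (n + 1) = ((n : ℂ) + 1 + c) * a n / ((n : ℂ) + 1)) (n : ℕ) :
    a n = a 0 * ∏ t ∈ Finset.Icc 1 n, ((t : ℂ) + c) / t := by
  induction n with
  | zero => simp
  | succ n ih =>
    rw [h, ih, Finset.prod_Icc_succ_top (by omega)]
    push_cast
    ring

lemma prod_add_sum_Icc_succ (α β : ℂ) (n : ℕ) :
    (∏ s ∈ Finset.Icc 1 (n + 1), ((s : ℂ) + α) / s)
      + ∑ s ∈ Finset.Icc 1 (n + 1), (β / s) * (∏ t ∈ Finset.Icc 1 (s - 1), ((t : ℂ) + β) / t)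
          * ∏ t ∈ Finset.Icc (s + 1) (n + 1), ((t : ℂ) + α) / t
    = (((n : ℂ) + 1 + α) * ((∏ s ∈ Finset.Icc 1 n, ((s : ℂ) + α) / s)
          + ∑ s ∈ Finset.Icc 1 n, (β / s) * (∏ t ∈ Finset.Icc 1 (s - 1), ((t : ℂ) + β) / t)
              * ∏ t ∈ Finset.Icc (s + 1) n, ((t : ℂ) + α) / t)
        + β * ∏ t ∈ Finset.Icc 1 n, ((t : ℂ) + β) / t) / ((n : ℂ) + 1) := by
  have hlast : ∏ t ∈ Finset.Icc (n + 1 + 1) (n + 1), ((t : ℂ) + α) / t = 1 := by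
    rw [Finset.Icc_eq_empty (by omega), Finset.prod_empty]
  have hinner : ∀ s ∈ Finset.Icc 1 n, ∏ t ∈ Finset.Icc (s + 1) (n + 1), ((t : ℂ) + α) / t
      = (∏ t ∈ Finset.Icc (s + 1) n, ((t : ℂ) + α) / t) * (((n : ℂ) + 1 + α) / ((n : ℂ) + 1)) :=
    fun s hs => by
      rw [Finset.prod_Icc_succ_top (by simp at hs; omega)]
      push_cast
      ring
  rw [Finset.prod_Icc_succ_top (by omega), Finset.sum_Icc_succ_top (by omega), hlast,
    Finset.sum_congr rfl fun s hs => by rw [hinner s hs, ← mul_assoc], ← Finset.sum_mul,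
    Nat.add_sub_cancel]
  push_cast
  ring

lemma eq_mul_prod_add_sum_of_succ {α β : ℂ} {a b : ℕ → ℂ}
    (ha : ∀ n : ℕ, a n = b 0 * ∏ t ∈ Finset.Icc 1 n, ((t : ℂ) + β) / t)
    (hb : ∀ n : ℕ, b (n + 1) = (((n : ℂ) + 1 + α) * b n + β * a n) / ((n : ℂ) + 1)) (n : ℕ) :
    b n = b 0 * ((∏ s ∈ Finset.Icc 1 n, ((s : ℂ) + α) / s)
      + ∑ s ∈ Finset.Icc 1 n, (β / s) * (∏ t ∈ Finset.Icc 1 (s - 1), ((t : ℂ) + β) / t)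
          * ∏ t ∈ Finset.Icc (s + 1) n, ((t : ℂ) + α) / t) := by
  induction n with
  | zero => simp
  | succ n ih =>
    rw [hb, ih, ha, prod_add_sum_Icc_succ]
    ring

section Urn

variable {Ω : Type*} {m : ℕ} {R : ℕ → Ω → Fin m → ℝ}

def stepEvent [NeZero m] (R : ℕ → Ω → Fin m → ℝ) (n : ℕ) (j : Fin m) : Set Ω :=
  {ω | R (n + 1) ω = R n ω + Pi.single (j + 1) 1}

lemma pairwise_disjoint_stepEvent [NeZero m] (n : ℕ) :
    Pairwise (Function.onFun Disjoint (stepEvent R n)) := by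
  refine fun j j' hne => Set.disjoint_left.mpr fun ω (hj : _ = _) (hj' : _ = _) => hne ?_
  have hsingle := congrFun (add_left_cancel (hj.symm.trans hj')) (j + 1)
  simpa [Pi.single_apply, eq_comm] using hsingle

lemma measurable_urnFilt [MeasurableSpace Ω] (n : ℕ) : Measurable[urnFilt m R n] (R n) :=
  measurable_iff_comap_le.mpr <| le_iSup₂
    (f := fun i (_ : i ∈ Finset.range (n + 1)) => MeasurableSpace.comap (R i) inferInstance)
    n (Finset.self_mem_range_succ n)

namespace IsCyclicUrn

variable [MeasurableSpace Ω] {μ : Measure Ω} {j0 : Fin m} (hR : IsCyclicUrn μ m j0 R)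
include hR

lemma urnFilt_le (n : ℕ) : urnFilt m R n ≤ ‹MeasurableSpace Ω› :=
  iSup₂_le fun i _ => (hR.meas i).comap_le

lemma measurableSet_stepEvent [NeZero m] (n : ℕ) (j : Fin m) :
    MeasurableSet (stepEvent R n j) :=
  measurableSet_eq_fun (hR.meas (n + 1)) ((hR.meas n).add_const _)

lemma condExp_stepEvent [NeZero m] (n : ℕ) (j : Fin m) :
    μ[(stepEvent R n j).indicator 1 | urnFilt m R n] =ᵐ[μ] fun ω => R n ω j / (n + 1) := by
  have hsingle : (Pi.single (j + 1) 1 : Fin m → ℝ)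
      = fun i : Fin m => if (i : ℕ) = ((j : ℕ) + 1) % m then 1 else 0 := by
    ext i
    simp [Pi.single_apply, Fin.ext_iff, Fin.val_add]
  have hevent : stepEvent R n j = {ω | R (n + 1) ω =
      fun i => R n ω i + if (i : ℕ) = ((j : ℕ) + 1) % m then 1 else 0} := by
    simp only [stepEvent, hsingle]; rfl
  rw [hevent]
  exact hR.step n j

lemma nonneg (n : ℕ) (ω : Ω) (i : Fin m) : 0 ≤ R n ω i := by
  obtain ⟨z, hz⟩ := hR.natVal n ω i
  exact hz ▸ z.cast_nonneg

/-- The events `stepEvent R n j` are disjoint and their conditional probabilities add up to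
`∑ j, R n ω j / (n + 1)`, which is `1` once the total number of balls is known. -/
lemma ae_exists_stepEvent_of_sum [NeZero m] (n : ℕ)
    (hsum : ∀ᵐ ω ∂μ, ∑ i, R n ω i = n + 1) : ∀ᵐ ω ∂μ, ∃ j, ω ∈ stepEvent R n j := by
  have := hR.isProb
  have hle := hR.urnFilt_le n
  have hmeas := hR.measurableSet_stepEvent n
  have hprob : ∀ j, μ.real (stepEvent R n j) = ∫ ω, R n ω j / (n + 1) ∂μ := fun j => by
    rw [← integral_indicator_one (hmeas j), ← integral_condExp hle]
    exact integral_congr_ae (hR.condExp_stepEvent n j)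
  have hunion : μ.real (⋃ j, stepEvent R n j) = 1 := by
    rw [measureReal_iUnion_fintype (pairwise_disjoint_stepEvent n) hmeas]
    rw [Finset.sum_congr rfl fun j _ => hprob j, ← integral_finsetSum _ fun j _ =>
      integrable_condExp.congr (hR.condExp_stepEvent n j)]
    rw [integral_congr_ae (hsum.mono fun ω hω => by
      rw [← Finset.sum_div, hω, div_self (Nat.cast_add_one_ne_zero n)])]
    simp
  have hU : μ (⋃ j, stepEvent R n j) = 1 := by
    rwa [measureReal_def, ENNReal.toReal_eq_one_iff] at hunion
  filter_upwards [mem_ae_iff.mpr ((prob_compl_eq_zero_iff (.iUnion hmeas)).mpr hU)] with ω hω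
  exact Set.mem_iUnion.mp hω

lemma ae_sum_eq (n : ℕ) : ∀ᵐ ω ∂μ, ∑ i, R n ω i = n + 1 := by
  have : NeZero m := ⟨j0.pos.ne'⟩
  induction n with
  | zero => exact .of_forall fun ω => by simp [hR.init ω]
  | succ n ih =>
    filter_upwards [ih, hR.ae_exists_stepEvent_of_sum n ih] with ω hω ⟨j, hj⟩
    rw [show R (n + 1) ω = _ from hj]
    simp [Finset.sum_add_distrib, hω]

lemma ae_exists_stepEvent [NeZero m] (n : ℕ) : ∀ᵐ ω ∂μ, ∃ j, ω ∈ stepEvent R n j :=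
  hR.ae_exists_stepEvent_of_sum n (hR.ae_sum_eq n)

lemma ae_norm_le (n : ℕ) : ∀ᵐ ω ∂μ, ‖R n ω‖ ≤ n + 1 := by
  filter_upwards [hR.ae_sum_eq n] with ω hω
  refine (pi_norm_le_iff_of_nonneg (by positivity)).mpr fun i => ?_
  rw [Real.norm_of_nonneg (hR.nonneg n ω i), ← hω]
  exact Finset.single_le_sum (fun t _ => hR.nonneg n ω t) (Finset.mem_univ i)

lemma integral_comp_succ [NeZero m] (n : ℕ) {φ : (Fin m → ℝ) → ℂ} (hφ : Measurable φ)
    (hint : ∀ j : Fin m, Integrable (fun ω => φ (R n ω + Pi.single (j + 1) 1)) μ) :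
    ∫ ω, φ (R (n + 1) ω) ∂μ
      = (∫ ω, ∑ j : Fin m, (R n ω j : ℂ) * φ (R n ω + Pi.single (j + 1) 1) ∂μ) / (n + 1) := by
  have := hR.isProb
  set g : Fin m → Ω → ℂ := fun j ω => φ (R n ω + Pi.single (j + 1) 1)
  have hg : ∀ j, Measurable[urnFilt m R n] (g j) := fun j =>
    (hφ.comp (measurable_add_const _)).comp (measurable_urnFilt n)
  have hind : ∀ j, Integrable (fun ω => (stepEvent R n j).indicator (1 : Ω → ℝ) ω • g j ω) μ :=
    fun j => (hint j).bdd_smul (𝕜 := ℝ) 1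
      (measurable_one.indicator (hR.measurableSet_stepEvent n j)).aestronglyMeasurable
      (.of_forall fun ω => (norm_indicator_le_norm_self _ _).trans (by simp))
  have hfrac : ∀ j, Integrable (fun ω => (R n ω j / (n + 1)) • g j ω) μ :=
    fun j => (hint j).bdd_smul 1
      ((((measurable_pi_apply j).comp (hR.meas n)).div_const _).aestronglyMeasurable)
      ((hR.ae_norm_le n).mono fun ω h => by
        rw [norm_div, Real.norm_of_nonneg (by positivity : (0 : ℝ) ≤ n + 1),
          div_le_one (by positivity)]
        exact (norm_le_pi_norm _ j).trans h)
  have hdecomp : (fun ω => φ (R (n + 1) ω))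
      =ᵐ[μ] fun ω => ∑ j, (stepEvent R n j).indicator (1 : Ω → ℝ) ω • g j ω := by
    filter_upwards [hR.ae_exists_stepEvent n] with ω ⟨j, hj⟩
    have hother : ∀ i ≠ j, ω ∉ stepEvent R n i := fun i hij =>
      (pairwise_disjoint_stepEvent n hij).symm.notMem_of_mem_left hj
    rw [Finset.sum_eq_single j (fun i _ hij => by
      rw [Set.indicator_of_notMem (hother i hij), zero_smul]) (by simp)]
    simp [Set.indicator_of_mem hj, g, show R (n + 1) ω = _ from hj]
  calc ∫ ω, φ (R (n + 1) ω) ∂μ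
      = ∑ j, ∫ ω, (stepEvent R n j).indicator (1 : Ω → ℝ) ω • g j ω ∂μ := by
        rw [integral_congr_ae hdecomp, integral_finsetSum _ fun j _ => hind j]
    _ = ∑ j, ∫ ω, (R n ω j / (n + 1)) • g j ω ∂μ := Finset.sum_congr rfl fun j _ =>
        integral_smul_eq_of_condExp_ae_eq (hR.urnFilt_le n) (integrable_const 1 |>.indicator
          (hR.measurableSet_stepEvent n j)) (hind j) (hg j).aestronglyMeasurable
          (hR.condExp_stepEvent n j)
    _ = _ := by
        rw [← integral_finsetSum _ fun j _ => hfrac j, ← integral_div]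
        congr 1 with ω
        simp [g, Finset.sum_div, Complex.real_smul, div_mul_eq_mul_div]

lemma ae_norm_add_single_le (n : ℕ) (i : Fin m) :
    ∀ᵐ ω ∂μ, ‖R n ω + Pi.single i 1‖ ≤ n + 2 :=
  (hR.ae_norm_le n).mono fun ω h => (norm_add_le _ _).trans <| by
    rw [Pi.norm_single, norm_one]; linarith

lemma ae_sum_ofReal_eq (n : ℕ) : ∀ᵐ ω ∂μ, ∑ i, (R n ω i : ℂ) = n + 1 :=
  (hR.ae_sum_eq n).mono fun ω h => by exact_mod_cast h

lemma ucoef_init (q : ℕ) (ω : Ω) : ucoef m q (R 0 ω) = cw m ^ (q * j0) := by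
  rw [hR.init ω, ← ucoef_single]
  congr 1
  ext i
  simp [Pi.single_apply]

lemma integral_ucoef_succ [NeZero m] (q n : ℕ) :
    ∫ ω, ucoef m q (R (n + 1) ω) ∂μ
      = ((n : ℂ) + 1 + cw m ^ q) * (∫ ω, ucoef m q (R n ω) ∂μ) / ((n : ℂ) + 1) := by
  have := hR.isProb
  rw [hR.integral_comp_succ n (measurable_ucoef m q) fun j =>
      integrable_ucoef_comp ((hR.meas n).add_const _) (hR.ae_norm_add_single_le n _) q,
    ← integral_const_mul]
  congr 1
  refine integral_congr_ae ((hR.ae_sum_ofReal_eq n).mono fun ω hω => ?_)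
  simp only [sum_mul_ucoef_add_single_succ, hω]

lemma integral_ucoef_mul_ucoef_succ [NeZero m] (k l n : ℕ) :
    ∫ ω, ucoef m k (R (n + 1) ω) * ucoef m l (R (n + 1) ω) ∂μ
      = (((n : ℂ) + 1 + (cw m ^ k + cw m ^ l)) * ∫ ω, ucoef m k (R n ω) * ucoef m l (R n ω) ∂μ
          + cw m ^ (k + l) * ∫ ω, ucoef m (k + l) (R n ω) ∂μ) / ((n : ℂ) + 1) := by
  have := hR.isProb
  have hbound := hR.ae_norm_le n
  rw [hR.integral_comp_succ n (φ := fun w => ucoef m k w * ucoef m l w)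
      ((measurable_ucoef m k).mul (measurable_ucoef m l)) fun j =>
      integrable_ucoef_mul_ucoef_comp ((hR.meas n).add_const _)
        (hR.ae_norm_add_single_le n _) k l,
    ← integral_const_mul, ← integral_const_mul,
    ← integral_add ((integrable_ucoef_mul_ucoef_comp (hR.meas n) hbound k l).const_mul _)
      ((integrable_ucoef_comp (hR.meas n) hbound (k + l)).const_mul _)]
  congr 1
  refine integral_congr_ae ((hR.ae_sum_ofReal_eq n).mono fun ω hω => ?_)
  simp only [sum_mul_ucoef_mul_ucoef_add_single_succ, hω]

lemma integral_ucoef_eq [NeZero m] (q n : ℕ) :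
    ∫ ω, ucoef m q (R n ω) ∂μ
      = cw m ^ (q * j0) * ∏ t ∈ Finset.Icc 1 n, ((t : ℂ) + cw m ^ q) / t := by
  have := hR.isProb
  rw [eq_mul_prod_of_succ (a := fun n => ∫ ω, ucoef m q (R n ω) ∂μ) (hR.integral_ucoef_succ q) n]
  simp [hR.ucoef_init]

lemma integral_ucoef_mul_ucoef_eq [NeZero m] (k l n : ℕ) :
    ∫ ω, ucoef m k (R n ω) * ucoef m l (R n ω) ∂μ
      = cw m ^ ((k + l) * j0)
        * ((∏ s ∈ Finset.Icc 1 n, ((s : ℂ) + (cw m ^ k + cw m ^ l)) / s)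
          + ∑ s ∈ Finset.Icc 1 n, (cw m ^ (k + l) / s)
              * (∏ t ∈ Finset.Icc 1 (s - 1), ((t : ℂ) + cw m ^ (k + l)) / t)
              * ∏ t ∈ Finset.Icc (s + 1) n, ((t : ℂ) + (cw m ^ k + cw m ^ l)) / t) := by
  have := hR.isProb
  have hzero : ∫ ω, ucoef m k (R 0 ω) * ucoef m l (R 0 ω) ∂μ = cw m ^ ((k + l) * j0) := by
    simp [hR.ucoef_init, add_mul, pow_add]
  rw [← hzero]
  exact eq_mul_prod_add_sum_of_succ (a := fun n => ∫ ω, ucoef m (k + l) (R n ω) ∂μ)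
    (b := fun n => ∫ ω, ucoef m k (R n ω) * ucoef m l (R n ω) ∂μ)
    (fun n => by rw [hR.integral_ucoef_eq, hzero])
    (hR.integral_ucoef_mul_ucoef_succ k l) n

end IsCyclicUrn

end Urn

theorem stmt6 {Ω : Type*} [MeasurableSpace Ω] (μ : Measure Ω) (m : ℕ) (hm : 2 ≤ m)
    (R : ℕ → Ω → Fin m → ℝ) (hR : IsCyclicUrn μ m ⟨0, by omega⟩ R)
    (k l : ℕ) (n : ℕ) :
    ∫ ω, ucoef m k (R n ω) * ucoef m l (R n ω) ∂μ =
      (∏ s ∈ Finset.Icc 1 n, (((s : ℂ) + cw m ^ k + cw m ^ l) / (s : ℂ))) +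
      ∑ s ∈ Finset.Icc 1 n, (cw m ^ (k + l) / (s : ℂ)) *
        (∏ t ∈ Finset.Icc 1 (s - 1), (((t : ℂ) + cw m ^ (k + l)) / (t : ℂ))) *
        (∏ t ∈ Finset.Icc (s + 1) n, (((t : ℂ) + cw m ^ k + cw m ^ l) / (t : ℂ))) := by
  have : NeZero m := ⟨by omega⟩
  simpa only [mul_zero, pow_zero, one_mul, add_assoc] using
    hR.integral_ucoef_mul_ucoef_eq k l n
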